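/- Let p ≠ q be primes and n, m positive integers with n ≡ 3 (mod 6) and m ≡ 3 (mod 6). Then the number of triples (A,B,C) of positive integers with A ≤ B ≤ C and A·B·C = p^n·q^m equals (15 + 9n + 9m)/24 + (2n² + 2m² + 12nm + 3n²m + 3nm² + n²m²)/24. -/

import Mathlib

/-!
Burnside's lemma for `S₃` permuting the factors of `N = a * b * c` gives
`6 · cuboidCount N = d₃(N) + 3 · #{a | a² ∣ N} + 2 · #{a | a³ = N}`, where `d₃(N)` counts ordered
triples. The function `d₃ = σ₀ * ζ` is multiplicative with `d₃(pⁿ) = C(n + 2, 2)`; the divisors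
`a` of `pⁿqᵐ` with `a² ∣ pⁿqᵐ` are the `pⁱqʲ` with `2i ≤ n`, `2j ≤ m`; and `pⁿqᵐ` is a cube when
`3 ∣ n, m`. For odd `n, m` divisible by `3` these three counts give the stated polynomial.
-/

/-- Number of cuboids with integer edge lengths and volume `N`. -/
noncomputable def cuboidCount (N : ℕ) : ℕ :=
  Set.ncard {t : ℕ × ℕ × ℕ | 0 < t.1 ∧ t.1 ≤ t.2.1 ∧ t.2.1 ≤ t.2.2 ∧ t.1 * t.2.1 * t.2.2 = N}

open Finset ArithmeticFunction
open scoped ArithmeticFunction.sigma ArithmeticFunction.zeta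

def orderedTriples (N : ℕ) : Finset (ℕ × ℕ × ℕ) :=
  {t ∈ N.divisors ×ˢ N.divisors ×ˢ N.divisors | t.1 * t.2.1 * t.2.2 = N}

lemma mem_orderedTriples {N : ℕ} {t : ℕ × ℕ × ℕ} :
    t ∈ orderedTriples N ↔ t.1 * t.2.1 * t.2.2 = N ∧ N ≠ 0 := by
  obtain ⟨a, b, c⟩ := t
  simp only [orderedTriples, mem_filter, mem_product, Nat.mem_divisors]
  constructor
  · rintro ⟨⟨⟨-, hN⟩, -⟩, h⟩
    exact ⟨h, hN⟩
  · rintro ⟨rfl, hN⟩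
    exact ⟨⟨⟨(dvd_mul_right a b).mul_right c, hN⟩, ⟨(dvd_mul_left b a).mul_right c, hN⟩,
      ⟨dvd_mul_left c _, hN⟩⟩, rfl⟩

def sortedTriples (N : ℕ) : Finset (ℕ × ℕ × ℕ) :=
  {t ∈ orderedTriples N | t.1 ≤ t.2.1 ∧ t.2.1 ≤ t.2.2}

lemma cuboidCount_eq_card_sortedTriples (N : ℕ) : cuboidCount N = #(sortedTriples N) := by
  rw [cuboidCount, ← Set.ncard_coe_finset]
  congr 1
  ext ⟨a, b, c⟩
  simp only [sortedTriples, coe_filter, mem_orderedTriples]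
  constructor
  · rintro ⟨ha, hab, hbc, rfl⟩
    have hb := ha.trans_le hab
    exact ⟨⟨rfl, (Nat.mul_pos (Nat.mul_pos ha hb) (hb.trans_le hbc)).ne'⟩, hab, hbc⟩
  · rintro ⟨⟨rfl, hN⟩, hab, hbc⟩
    exact ⟨Nat.pos_of_ne_zero (left_ne_zero_of_mul (left_ne_zero_of_mul hN)), hab, hbc, rfl⟩

def sort3 : ℕ × ℕ × ℕ → ℕ × ℕ × ℕ
  | (a, b, c) =>
    if a ≤ b then
      if b ≤ c then (a, b, c) else if a ≤ c then (a, c, b) else (c, a, b)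
    else
      if a ≤ c then (b, a, c) else if b ≤ c then (b, c, a) else (c, b, a)

def perms3 (t : ℕ × ℕ × ℕ) : Finset (ℕ × ℕ × ℕ) :=
  {(t.1, t.2.1, t.2.2), (t.1, t.2.2, t.2.1), (t.2.1, t.1, t.2.2),
   (t.2.1, t.2.2, t.1), (t.2.2, t.1, t.2.1), (t.2.2, t.2.1, t.1)}

lemma sort3_sorted (t : ℕ × ℕ × ℕ) :
    (sort3 t).1 ≤ (sort3 t).2.1 ∧ (sort3 t).2.1 ≤ (sort3 t).2.2 := by
  obtain ⟨a, b, c⟩ := t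
  simp only [sort3]
  split_ifs <;> simp only <;> omega

lemma mem_perms3_sort3 (t : ℕ × ℕ × ℕ) : t ∈ perms3 (sort3 t) := by
  obtain ⟨a, b, c⟩ := t
  simp only [sort3]
  split_ifs <;> simp [perms3]

lemma sort3_eq_of_mem_perms3 {a b c : ℕ} (hab : a ≤ b) (hbc : b ≤ c) {t : ℕ × ℕ × ℕ}
    (ht : t ∈ perms3 (a, b, c)) : sort3 t = (a, b, c) := by
  simp only [perms3, mem_insert, mem_singleton] at ht
  rcases ht with rfl | rfl | rfl | rfl | rfl | rfl <;> simp only [sort3] <;> split_ifs <;>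
    simp only [Prod.mk.injEq, true_and, and_true] <;> omega

lemma prod_eq_of_mem_perms3 {s t : ℕ × ℕ × ℕ} (ht : t ∈ perms3 s) :
    t.1 * t.2.1 * t.2.2 = s.1 * s.2.1 * s.2.2 := by
  simp only [perms3, mem_insert, mem_singleton] at ht
  rcases ht with rfl | rfl | rfl | rfl | rfl | rfl <;> ring

lemma sort3_mem_sortedTriples {N : ℕ} {t : ℕ × ℕ × ℕ} (ht : t ∈ orderedTriples N) :
    sort3 t ∈ sortedTriples N := by
  refine mem_filter.2 ⟨?_, sort3_sorted t⟩
  rwa [mem_orderedTriples, ← prod_eq_of_mem_perms3 (mem_perms3_sort3 t), ← mem_orderedTriples]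

lemma filter_sort3_eq_perms3 {N : ℕ} {s : ℕ × ℕ × ℕ} (hs : s ∈ sortedTriples N) :
    {t ∈ orderedTriples N | sort3 t = s} = perms3 s := by
  obtain ⟨a, b, c⟩ := s
  obtain ⟨habc, hab, hbc⟩ := mem_filter.1 hs
  ext t
  rw [mem_filter]
  constructor
  · rintro ⟨-, ht⟩
    exact ht ▸ mem_perms3_sort3 t
  · intro ht
    refine ⟨?_, sort3_eq_of_mem_perms3 hab hbc ht⟩
    rwa [mem_orderedTriples, prod_eq_of_mem_perms3 ht, ← mem_orderedTriples]

/-- In Burnside's count `∑ σ ∈ S₃, #Fix σ`, the three transpositions have equinumerous fixed-point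
sets and both 3-cycles fix exactly the constant triples. -/
def burnsideWeight (t : ℕ × ℕ × ℕ) : ℕ :=
  1 + 3 * (if t.1 = t.2.1 then 1 else 0) + 2 * (if t.1 = t.2.1 ∧ t.2.1 = t.2.2 then 1 else 0)

lemma sum_burnsideWeight_perms3 {a b c : ℕ} (hab : a ≤ b) (hbc : b ≤ c) :
    ∑ t ∈ perms3 (a, b, c), burnsideWeight t = 6 := by
  rcases hab.eq_or_lt with rfl | hab <;> rcases hbc.eq_or_lt with rfl | hbc
  · simp [perms3, burnsideWeight]
  · simp [perms3, burnsideWeight, hbc.ne, hbc.ne']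
  · simp [perms3, burnsideWeight, hab.ne, hab.ne']
  · simp [perms3, burnsideWeight, hab.ne, hab.ne', hbc.ne, hbc.ne', (hab.trans hbc).ne,
      (hab.trans hbc).ne']

lemma sum_burnsideWeight_orderedTriples (N : ℕ) :
    ∑ t ∈ orderedTriples N, burnsideWeight t = 6 * #(sortedTriples N) := by
  rw [← sum_fiberwise_of_maps_to fun _ => sort3_mem_sortedTriples, mul_comm, ← smul_eq_mul,
    ← sum_const]
  refine sum_congr rfl fun s hs => ?_
  rw [filter_sort3_eq_perms3 hs]
  obtain ⟨-, hab, hbc⟩ := mem_filter.1 hs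
  exact sum_burnsideWeight_perms3 hab hbc

theorem six_mul_cuboidCount (N : ℕ) :
    6 * cuboidCount N = #(orderedTriples N) + 3 * #{t ∈ orderedTriples N | t.1 = t.2.1} +
      2 * #{t ∈ orderedTriples N | t.1 = t.2.1 ∧ t.2.1 = t.2.2} := by
  rw [cuboidCount_eq_card_sortedTriples, ← sum_burnsideWeight_orderedTriples, card_filter,
    card_filter, card_eq_sum_ones]
  simp only [burnsideWeight, sum_add_distrib, mul_sum]

lemma card_filter_orderedTriples_fst_eq_snd (N : ℕ) :
    #{t ∈ orderedTriples N | t.1 = t.2.1} = #{a ∈ N.divisors | a ^ 2 ∣ N} := by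
  refine card_nbij' (fun t => t.1) (fun a => (a, a, N / a ^ 2)) ?_ ?_ ?_ fun _ _ => rfl
  · rintro ⟨a, b, c⟩ ht
    obtain ⟨ht, rfl : a = b⟩ := mem_filter.1 ht
    obtain ⟨rfl, hN⟩ := mem_orderedTriples.1 ht
    exact mem_filter.2 ⟨Nat.mem_divisors.2 ⟨(dvd_mul_right a a).mul_right c, hN⟩, c, by ring⟩
  · intro a ha
    obtain ⟨ha, hsq⟩ := mem_filter.1 ha
    refine mem_filter.2 ⟨mem_orderedTriples.2 ⟨?_, Nat.ne_zero_of_mem_divisors ha⟩, rfl⟩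
    rw [← sq, Nat.mul_div_cancel' hsq]
  · rintro ⟨a, b, c⟩ ht
    obtain ⟨ht, rfl : a = b⟩ := mem_filter.1 ht
    obtain ⟨rfl, hN⟩ := mem_orderedTriples.1 ht
    show (a, a, a * a * c / a ^ 2) = (a, a, c)
    rw [sq, Nat.mul_div_cancel_left c (Nat.pos_of_ne_zero (left_ne_zero_of_mul hN))]

lemma filter_orderedTriples_pow_three_eq_singleton {r : ℕ} (hr : r ≠ 0) :
    {t ∈ orderedTriples (r ^ 3) | t.1 = t.2.1 ∧ t.2.1 = t.2.2} = {(r, r, r)} := by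
  ext ⟨a, b, c⟩
  simp only [mem_filter, mem_orderedTriples, mem_singleton, Prod.mk.injEq]
  constructor
  · rintro ⟨⟨habc, -⟩, rfl, rfl⟩
    have ha : a = r :=
      Nat.pow_left_injective (n := 3) (by norm_num) (show a ^ 3 = r ^ 3 by rw [← habc]; ring)
    exact ⟨ha, ha, ha⟩
  · rintro ⟨rfl, rfl, rfl⟩
    exact ⟨⟨by ring, pow_ne_zero 3 hr⟩, rfl, rfl⟩

lemma filter_orderedTriples_snd_mul_eq {N d : ℕ} (hd : d ∣ N) (hN : N ≠ 0) :
    {t ∈ orderedTriples N | t.2.1 * t.2.2 = d} =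
      d.divisorsAntidiagonal.map (Function.Embedding.sectR (N / d) _) := by
  ext ⟨a, b, c⟩
  have hd0 : d ≠ 0 := ne_zero_of_dvd_ne_zero hN hd
  simp only [mem_filter, mem_orderedTriples, mem_map, Nat.mem_divisorsAntidiagonal,
    Function.Embedding.sectR_apply, Prod.mk.injEq]
  constructor
  · rintro ⟨⟨habc, -⟩, rfl⟩
    refine ⟨(b, c), ⟨rfl, hd0⟩, ?_, rfl⟩
    rw [← habc, mul_assoc, Nat.mul_div_cancel _ (Nat.pos_of_ne_zero hd0)]
  · rintro ⟨⟨b, c⟩, ⟨rfl, -⟩, rfl, rfl, rfl⟩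
    exact ⟨⟨by rw [mul_assoc, Nat.div_mul_cancel hd], hN⟩, rfl⟩

lemma card_orderedTriples_eq_sigma_zero_mul_zeta (N : ℕ) :
    #(orderedTriples N) = (σ 0 * ζ) N := by
  rcases eq_or_ne N 0 with rfl | hN
  · simp [orderedTriples]
  rw [mul_zeta_apply, card_eq_sum_card_fiberwise (f := fun t => t.2.1 * t.2.2)
    (t := N.divisors)]
  · refine sum_congr rfl fun d hd => ?_
    rw [filter_orderedTriples_snd_mul_eq (Nat.dvd_of_mem_divisors hd) hN, card_map,
      ← Nat.map_div_right_divisors, card_map, sigma_zero_apply]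
  · rintro ⟨a, b, c⟩ h
    obtain ⟨habc, hN⟩ := mem_orderedTriples.1 h
    exact Nat.mem_divisors.2 ⟨⟨a, by rw [← habc]; ring⟩, hN⟩

lemma card_orderedTriples_mul {M N : ℕ} (h : M.Coprime N) :
    #(orderedTriples (M * N)) = #(orderedTriples M) * #(orderedTriples N) := by
  simp only [card_orderedTriples_eq_sigma_zero_mul_zeta]
  exact (isMultiplicative_sigma.mul isMultiplicative_zeta).map_mul_of_coprime h

lemma sum_range_add_one_eq_choose_two (n : ℕ) :
    ∑ i ∈ range (n + 1), (i + 1) = (n + 2).choose 2 := by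
  induction n with
  | zero => rfl
  | succ n ih =>
    rw [sum_range_succ, ih, Nat.choose_succ_succ' (n + 2), Nat.choose_one_right]
    ring

lemma card_orderedTriples_prime_pow {p : ℕ} (hp : p.Prime) (n : ℕ) :
    #(orderedTriples (p ^ n)) = (n + 2).choose 2 := by
  rw [card_orderedTriples_eq_sigma_zero_mul_zeta, mul_zeta_apply, Nat.sum_divisors_prime_pow hp,
    ← sum_range_add_one_eq_choose_two]
  exact sum_congr rfl fun i _ => sigma_zero_apply_prime_pow hp

section TwoPrimes

variable {p q : ℕ}

lemma pow_mul_pow_dvd_pow_mul_pow_iff (hp : p.Prime) (hq : q.Prime) (hpq : p ≠ q)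
    {i j n m : ℕ} : p ^ i * q ^ j ∣ p ^ n * q ^ m ↔ i ≤ n ∧ j ≤ m := by
  have hcop : ∀ k l, (p ^ k).Coprime (q ^ l) := fun k l =>
    ((Nat.coprime_primes hp hq).2 hpq).pow k l
  constructor
  · intro h
    exact ⟨(Nat.pow_dvd_pow_iff_le_right hp.one_lt).1
        ((hcop i m).dvd_of_dvd_mul_right (dvd_of_mul_right_dvd h)),
      (Nat.pow_dvd_pow_iff_le_right hq.one_lt).1
        ((hcop n j).symm.dvd_of_dvd_mul_left (dvd_of_mul_left_dvd h))⟩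
  · rintro ⟨hi, hj⟩
    exact mul_dvd_mul (pow_dvd_pow p hi) (pow_dvd_pow q hj)

lemma pow_mul_pow_injective (hp : p.Prime) (hq : q.Prime) (hpq : p ≠ q) :
    Function.Injective fun e : ℕ × ℕ => p ^ e.1 * q ^ e.2 := by
  rintro ⟨i, j⟩ ⟨k, l⟩ h
  have h₁ := (pow_mul_pow_dvd_pow_mul_pow_iff hp hq hpq).1 h.dvd
  have h₂ := (pow_mul_pow_dvd_pow_mul_pow_iff hp hq hpq).1 h.symm.dvd
  simp only [Prod.mk.injEq]
  omega

lemma exists_eq_pow_mul_pow_of_dvd (hp : p.Prime) (hq : q.Prime) {a n m : ℕ}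
    (h : a ∣ p ^ n * q ^ m) : ∃ i j, a = p ^ i * q ^ j := by
  obtain ⟨u, v, hu, hv, rfl⟩ := exists_dvd_and_dvd_of_dvd_mul h
  obtain ⟨i, -, rfl⟩ := (Nat.dvd_prime_pow hp).1 hu
  obtain ⟨j, -, rfl⟩ := (Nat.dvd_prime_pow hq).1 hv
  exact ⟨i, j, rfl⟩

lemma filter_sq_dvd_pow_mul_pow (hp : p.Prime) (hq : q.Prime) (hpq : p ≠ q) (n m : ℕ) :
    {a ∈ (p ^ n * q ^ m).divisors | a ^ 2 ∣ p ^ n * q ^ m} =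
      (range (n / 2 + 1) ×ˢ range (m / 2 + 1)).image fun e => p ^ e.1 * q ^ e.2 := by
  have hsq : ∀ i j, (p ^ i * q ^ j) ^ 2 = p ^ (2 * i) * q ^ (2 * j) := fun i j => by ring
  ext a
  simp only [mem_filter, Nat.mem_divisors, mem_image, mem_product, mem_range, Prod.exists]
  constructor
  · rintro ⟨⟨ha, -⟩, hsqa⟩
    obtain ⟨i, j, rfl⟩ := exists_eq_pow_mul_pow_of_dvd hp hq ha
    rw [hsq, pow_mul_pow_dvd_pow_mul_pow_iff hp hq hpq] at hsqa
    exact ⟨i, j, ⟨by omega, by omega⟩, rfl⟩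
  · rintro ⟨i, j, ⟨hi, hj⟩, rfl⟩
    have hsqa : (p ^ i * q ^ j) ^ 2 ∣ p ^ n * q ^ m := by
      rw [hsq, pow_mul_pow_dvd_pow_mul_pow_iff hp hq hpq]
      omega
    exact ⟨⟨(dvd_pow_self _ two_ne_zero).trans hsqa,
      mul_ne_zero (pow_ne_zero _ hp.ne_zero) (pow_ne_zero _ hq.ne_zero)⟩, hsqa⟩

lemma card_filter_sq_dvd_pow_mul_pow (hp : p.Prime) (hq : q.Prime) (hpq : p ≠ q) (n m : ℕ) :
    #{a ∈ (p ^ n * q ^ m).divisors | a ^ 2 ∣ p ^ n * q ^ m} = (n / 2 + 1) * (m / 2 + 1) := by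
  rw [filter_sq_dvd_pow_mul_pow hp hq hpq, card_image_of_injective _
    (pow_mul_pow_injective hp hq hpq), card_product, card_range, card_range]

end TwoPrimes

theorem cuboid_count_two_primes_general (p q n m : ℕ) (hp : p.Prime) (hq : q.Prime)
    (hpq : p ≠ q) (hnmod : n % 6 = 3) (hmmod : m % 6 = 3) :
    (cuboidCount (p ^ n * q ^ m) : ℚ) = (15 + 9 * (n : ℚ) + 9 * (m : ℚ)) / 24 + (2 * (n : ℚ) ^ 2 + 2 * (m : ℚ) ^ 2 + 12 * n * m + 3 * n ^ 2 * m + 3 * n * m ^ 2 + n ^ 2 * m ^ 2) / 24 := by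
  obtain ⟨k, rfl⟩ : ∃ k, n = 6 * k + 3 := ⟨n / 6, by omega⟩
  obtain ⟨l, rfl⟩ : ∃ l, m = 6 * l + 3 := ⟨m / 6, by omega⟩
  have hcube : #{t ∈ orderedTriples (p ^ (6 * k + 3) * q ^ (6 * l + 3)) |
      t.1 = t.2.1 ∧ t.2.1 = t.2.2} = 1 := by
    rw [show p ^ (6 * k + 3) * q ^ (6 * l + 3) = (p ^ (2 * k + 1) * q ^ (2 * l + 1)) ^ 3 by ring,
      filter_orderedTriples_pow_three_eq_singleton
        (mul_ne_zero (pow_ne_zero _ hp.ne_zero) (pow_ne_zero _ hq.ne_zero)), card_singleton]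
  have hcount := six_mul_cuboidCount (p ^ (6 * k + 3) * q ^ (6 * l + 3))
  rw [card_orderedTriples_mul (((Nat.coprime_primes hp hq).2 hpq).pow _ _),
    card_orderedTriples_prime_pow hp, card_orderedTriples_prime_pow hq,
    card_filter_orderedTriples_fst_eq_snd, card_filter_sq_dvd_pow_mul_pow hp hq hpq, hcube,
    show (6 * k + 3) / 2 = 3 * k + 1 by omega, show (6 * l + 3) / 2 = 3 * l + 1 by omega] at hcount
  have hcountℚ := congrArg (Nat.cast : ℕ → ℚ) hcount
  push_cast [Nat.cast_choose_two] at hcountℚ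
  push_cast
  linear_combination hcountℚ / 6

theorem cuboid_count_two_primes (p q n m : ℕ) (hp : p.Prime) (hq : q.Prime)
    (hpq : p ≠ q) (hn : 0 < n) (hm : 0 < m)
    (hnmod : n % 6 = 3) (hmmod : m % 6 = 3) :
    (cuboidCount (p ^ n * q ^ m) : ℚ) = (15 + 9 * (n : ℚ) + 9 * (m : ℚ)) / 24 + (2 * (n : ℚ) ^ 2 + 2 * (m : ℚ) ^ 2 + 12 * n * m + 3 * n ^ 2 * m + 3 * n * m ^ 2 + n ^ 2 * m ^ 2) / 24 :=
  cuboid_count_two_primes_general p q n m hp hq hpq hnmod hmmod
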